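/- Let D be a difference scheme D(N, M, d) and let B be a mixed orthogonal array MOA(N, m, p₁¹p₂¹⋯p_m¹, 2) (B has N rows). Let A = [A₁, A₂] be the dN × (M+1) array whose row indexed by (i, g) ∈ {1,…,N} × ℤ_d has first entry the symbol i (from an N-letter alphabet) and remaining entries D(i,1)+g, …, D(i,M)+g. If MD(A) = 3 and MD(B) ≥ 1, then there exists an irredundant mixed orthogonal array IrMOA(dN, M+m, d^M p₁¹p₂¹⋯p_m¹, 2). -/

import Mathlib

/-!
The array is `C = [A₂, B']`, where row `(i, g)` of `A₂` is row `i` of `D` translated by `g`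
and row `(i, g)` of `B'` is row `i` of `B`. Fixing one column of `A₂` determines `g` from `i`,
and fixing two of them pins down the difference `D i j - D i j'`, which the difference scheme
counts; columns of `B'` are counted by `B`, each row of `B` occurring `d` times. `C` arises
from `A` by replacing the first column, which separates `(i, g)` from `(i', g')` only when
`i ≠ i'`, by the columns of `B`, which then separate them as well since `MD(B) ≥ 1`; hence
`MD(C) ≥ MD(A) = 3`.
-/

open Finset

/-- The Hamming distance between two rows of an array: the number of columns
in which the rows differ. -/
def hamDist {ι κ : Type*} [Fintype κ] (A : ι → κ → ℕ) (i i' : ι) : ℕ :=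
  (Finset.univ.filter fun j => A i j ≠ A i' j).card

/-- `MD(A)`: the minimum Hamming distance over all pairs of distinct rows. -/
noncomputable def minDist {ι κ : Type*} [Fintype κ] (A : ι → κ → ℕ) : ℕ :=
  sInf {n | ∃ i i', i ≠ i' ∧ hamDist A i i' = n}

/-- `A` is a mixed orthogonal array of strength `k` (rows indexed by `ι`,
columns by `κ`, column `j` taking values in `{0, …, lv j − 1}`): in the
subarray given by any choice of at most `k` columns, every tuple of symbols
occurs equally often as a row, namely (number of rows)/(product of the levels
of the chosen columns) times. -/
def IsMOA {ι κ : Type*} [Fintype ι] [Fintype κ] [DecidableEq κ]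
    (A : ι → κ → ℕ) (lv : κ → ℕ) (k : ℕ) : Prop :=
  (∀ i j, A i j < lv j) ∧
  ∀ S : Finset κ, S.card ≤ k → ∀ x : κ → ℕ, (∀ j ∈ S, x j < lv j) →
    (Finset.univ.filter fun i : ι => ∀ j ∈ S, A i j = x j).card * ∏ j ∈ S, lv j
      = Fintype.card ι

/-- An irredundant mixed orthogonal array of strength `k`: an MOA of strength
`k` any two distinct rows of which have Hamming distance at least `k+1`. -/
def IsIrMOA {ι κ : Type*} [Fintype ι] [Fintype κ] [DecidableEq κ]
    (A : ι → κ → ℕ) (lv : κ → ℕ) (k : ℕ) : Prop :=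
  IsMOA A lv k ∧ ∀ i i' : ι, i ≠ i' → k + 1 ≤ hamDist A i i'

/-- A difference scheme `D(r, c, d)`: an `r × c` matrix over `ℤ_d` such that
for any two distinct columns the `r` differences of corresponding entries
take each value of `ℤ_d` exactly `r/d` times. -/
def IsDiffScheme {r c d : ℕ} (B : Fin r → Fin c → ZMod d) : Prop :=
  ∀ j j' : Fin c, j ≠ j' → ∀ g : ZMod d,
    (Finset.univ.filter fun i : Fin r => B i j - B i j' = g).card * d = r

section HammingDistance

variable {ι κ : Type*} [Fintype κ]

lemma hamDist_sumElim {κ' : Type*} [Fintype κ'] (f : ι → κ → ℕ) (g : ι → κ' → ℕ) (i i' : ι) :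
    hamDist (fun k => Sum.elim (f k) (g k)) i i' = hamDist f i i' + hamDist g i i' := by
  simp only [hamDist, card_filter, Fintype.sum_sum_type, Sum.elim_inl, Sum.elim_inr]
  congr 1

lemma minDist_le_hamDist (A : ι → κ → ℕ) {i i' : ι} (h : i ≠ i') :
    minDist A ≤ hamDist A i i' :=
  Nat.sInf_le ⟨i, i', h, rfl⟩

lemma hamDist_unit_le_hamDist (c : ι → ℕ) {B : ι → κ → ℕ} (hB : 1 ≤ minDist B) (i i' : ι) :
    hamDist (fun k (_ : Unit) => c k) i i' ≤ hamDist B i i' := by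
  by_cases h : i = i'
  · simp [hamDist, h]
  · calc hamDist (fun k (_ : Unit) => c k) i i' ≤ Fintype.card Unit := card_filter_le _ _
      _ = 1 := Fintype.card_unit
      _ ≤ hamDist B i i' := hB.trans (minDist_le_hamDist B h)

end HammingDistance

section Translates

variable {d : ℕ} [NeZero d]

lemma ZMod.val_add_eq_iff_eq_sub (a g : ZMod d) {v : ℕ} (hv : v < d) :
    (a + g).val = v ↔ g = v - a :=
  calc (a + g).val = v ↔ (a + g).val = (v : ZMod d).val := by rw [ZMod.val_natCast_of_lt hv]
    _ ↔ a + g = v := (ZMod.val_injective d).eq_iff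
    _ ↔ g = v - a := eq_sub_iff_add_eq'.symm

lemma card_filter_val_add_eq (a : ZMod d) {v : ℕ} (hv : v < d) :
    #{g : ZMod d | (a + g).val = v} = 1 := by
  simp_rw [ZMod.val_add_eq_iff_eq_sub a _ hv, filter_eq', mem_univ, if_true, card_singleton]

lemma card_filter_val_add_eq_and (a b : ZMod d) {v w : ℕ} (hv : v < d) (hw : w < d) :
    #{g : ZMod d | (a + g).val = v ∧ (b + g).val = w} = if a - b = v - w then 1 else 0 := by
  have key : (v : ZMod d) - a = w - b ↔ a - b = v - w := by
    rw [sub_eq_sub_iff_sub_eq_sub, eq_comm]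
  simp_rw [ZMod.val_add_eq_iff_eq_sub _ _ hv, ZMod.val_add_eq_iff_eq_sub _ _ hw, ← key]
  split_ifs with h
  · simp [h, filter_eq']
  · exact card_eq_zero.2 <| filter_eq_empty_iff.2 fun g _ hg => h (hg.1 ▸ hg.2)

end Translates

section Join

variable {N M d : ℕ} {κ : Type*}

def translateArray (D : Fin N → Fin M → ZMod d) : Fin N × ZMod d → Fin M → ℕ :=
  fun p j => (D p.1 j + p.2).val

def joinArray (D : Fin N → Fin M → ZMod d) (B : Fin N → κ → ℕ) :
    Fin N × ZMod d → Fin M ⊕ κ → ℕ :=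
  fun p => Sum.elim (translateArray D p) (B p.1)

-- `[Fintype κ] [DecidableEq κ]` make the filter below decidable by the same instance as in `IsMOA`.
lemma card_filter_joinArray [NeZero d] [Fintype κ] [DecidableEq κ] (D : Fin N → Fin M → ZMod d)
    (B : Fin N → κ → ℕ) (T : Finset (Fin M)) (U : Finset κ) (x : Fin M ⊕ κ → ℕ) :
    #{p | ∀ j ∈ T.disjSum U, joinArray D B p j = x j}
      = ∑ i with ∀ j ∈ U, B i j = x (.inr j),
          #{g : ZMod d | ∀ j ∈ T, (D i j + g).val = x (.inl j)} := by
  rw [card_filter, Fintype.sum_prod_type, sum_filter]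
  refine sum_congr rfl fun i _ => ?_
  split_ifs with hi
  · rw [card_filter]
    refine sum_congr rfl fun g _ => if_congr ?_ rfl rfl
    simp [joinArray, translateArray, and_iff_left hi]
  · simp [joinArray, hi]

lemma hamDist_le_hamDist_joinArray [Fintype κ] (D : Fin N → Fin M → ZMod d) {B : Fin N → κ → ℕ}
    (hB : 1 ≤ minDist B) (p p' : Fin N × ZMod d) :
    hamDist (fun q => Sum.elim (fun _ : Unit => (q.1 : ℕ)) (translateArray D q)) p p'
      ≤ hamDist (joinArray D B) p p' := by
  calc _ = hamDist (fun q (_ : Unit) => (q.1 : ℕ)) p p' + hamDist (translateArray D) p p' :=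
        hamDist_sumElim _ _ p p'
    _ ≤ hamDist B p.1 p'.1 + hamDist (translateArray D) p p' :=
        Nat.add_le_add_right (hamDist_unit_le_hamDist Fin.val hB p.1 p'.1) _
    _ = hamDist (joinArray D B) p p' :=
        (add_comm _ _).trans (hamDist_sumElim (translateArray D) (fun q => B q.1) p p').symm

theorem isMOA_joinArray [NeZero d] [Fintype κ] [DecidableEq κ] {D : Fin N → Fin M → ZMod d}
    (hD : IsDiffScheme D) {B : Fin N → κ → ℕ} {lv : κ → ℕ} (hB : IsMOA B lv 2) :
    IsMOA (joinArray D B) (Sum.elim (fun _ => d) lv) 2 := by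
  refine ⟨fun p j => j.rec (fun _ => ZMod.val_lt _) (hB.1 p.1), fun S hS x hx => ?_⟩
  obtain ⟨T, U, rfl⟩ : ∃ (T : Finset (Fin M)) (U : Finset κ), S = T.disjSum U :=
    ⟨_, _, S.toLeft_disjSum_toRight.symm⟩
  rw [card_disjSum] at hS
  have hxT : ∀ j ∈ T, x (.inl j) < d := fun j hj => hx _ (inl_mem_disjSum.2 hj)
  have hBU (hU : #U ≤ 2) : #{i | ∀ j ∈ U, B i j = x (.inr j)} * ∏ j ∈ U, lv j = N := by
    simpa using hB.2 U hU (x ∘ .inr) fun j hj => hx _ (inr_mem_disjSum.2 hj)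
  rw [card_filter_joinArray, prod_disjSum, Fintype.card_prod, Fintype.card_fin, ZMod.card]
  simp only [Sum.elim_inl, Sum.elim_inr, prod_const]
  obtain hT | hT | hT : #T = 0 ∨ #T = 1 ∨ #T = 2 := by omega
  · rw [card_eq_zero.1 hT]
    simp only [notMem_empty, IsEmpty.forall_iff, implies_true, filter_true, card_univ, ZMod.card,
      sum_const, smul_eq_mul, card_empty, pow_zero, one_mul]
    rw [mul_right_comm, hBU (by omega)]
  · obtain ⟨j, rfl⟩ := card_eq_one.1 hT
    simp only [mem_singleton, forall_eq, card_filter_val_add_eq _ (hxT j (mem_singleton_self j)),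
      sum_const, smul_eq_mul, mul_one, card_singleton, pow_one]
    rw [mul_comm d, ← mul_assoc, hBU (by omega)]
  · obtain ⟨j, j', hjj', rfl⟩ := card_eq_two.1 hT
    rw [card_eq_zero.1 (by omega : #U = 0)]
    simp only [notMem_empty, IsEmpty.forall_iff, implies_true, filter_true, mem_insert,
      mem_singleton, forall_eq_or_imp, forall_eq, sum_boole, Nat.cast_id, card_pair hjj',
      card_filter_val_add_eq_and _ _ (hxT j (by simp)) (hxT j' (by simp)), prod_empty, mul_one]
    rw [sq, ← mul_assoc, hD j j' hjj']

end Join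

/-- Let `D` be a difference scheme `D(N, M, d)` and `B` an
`MOA(N, m, p₁¹⋯p_m¹, 2)`. Let `A = [A₁, A₂]` be the `dN × (M+1)` array whose
row indexed by `(i, g) ∈ Fin N × ℤ_d` has first entry the symbol `i` and
remaining entries `D(i,j) + g`. If `MD(A) = 3` and `MD(B) ≥ 1`, then there
exists an irredundant mixed orthogonal array
`IrMOA(dN, M+m, d^M p₁¹⋯p_m¹, 2)`. -/
theorem statement16 {N M m d : ℕ} [NeZero d]
    (D : Fin N → Fin M → ZMod d) (hD : IsDiffScheme D)
    (plv : Fin m → ℕ) (B : Fin N → Fin m → ℕ) (hB : IsMOA B plv 2)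
    (hMDA : minDist
        (fun p : Fin N × ZMod d =>
          Sum.elim (fun _ : Unit => (p.1 : ℕ)) fun j : Fin M => (D p.1 j + p.2).val)
      = 3)
    (hMDB : 1 ≤ minDist B) :
    ∃ C : Fin N × ZMod d → (Fin M ⊕ Fin m) → ℕ,
      IsIrMOA C (Sum.elim (fun _ => d) plv) 2 := by
  refine ⟨joinArray D B, isMOA_joinArray hD hB, fun p p' hpp' => ?_⟩
  calc 2 + 1 = minDist _ := hMDA.symm
    _ ≤ _ := minDist_le_hamDist _ hpp'
    _ ≤ _ := hamDist_le_hamDist_joinArray D hMDB p p'
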